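/- For every real number p, the matrix identity ρ(p) = (1/2 + p/√2) · P₀ + ((1 − √2)/2 + p/√2) · P₁ + (1/√2 − √2·p) · P₊ holds in Matrix (Fin 2) (Fin 2) ℝ. Moreover, all three coefficients are nonnegative if and only if (1 − tan(π/8))/2 ≤ p ≤ 1/2, so on this interval ρ(p) is a convex combination of the stabilizer projectors P₀, P₁, P₊. -/

import Mathlib

open Real

/-- The stabilizer projector `P₀ = |0⟩⟨0|`. -/
noncomputable def P0 : Matrix (Fin 2) (Fin 2) ℝ := !![1, 0; 0, 0]

/-- The stabilizer projector `P₁ = |1⟩⟨1|`. -/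
noncomputable def P1 : Matrix (Fin 2) (Fin 2) ℝ := !![0, 0; 0, 1]

/-- The stabilizer projector `P₊ = |+⟩⟨+|`. -/
noncomputable def Pplus : Matrix (Fin 2) (Fin 2) ℝ := !![1/2, 1/2; 1/2, 1/2]

/-- The magic state `|H⟩` after dephasing noise of rate `p`. -/
noncomputable def ρdeph (p : ℝ) : Matrix (Fin 2) (Fin 2) ℝ :=
  !![cos (π/8) ^ 2, (1 - 2*p) * cos (π/8) * sin (π/8);
     (1 - 2*p) * cos (π/8) * sin (π/8), sin (π/8) ^ 2]

/-!
A symmetric matrix `!![a, c; c, b]` equals `(a - c) • P₀ + (b - c) • P₁ + 2c • P₊`. For `ρ(p)` the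
entries follow from `cos²(π/8) = 1/2 + √2/4`, `sin²(π/8) = 1/2 - √2/4` and
`cos(π/8) sin(π/8) = sin(π/4)/2 = √2/4`. The weights of `P₁` and `P₊` are nonnegative exactly for
`p ≥ 1 - √2/2` and `p ≤ 1/2` respectively, while the weight of `P₀` exceeds that of `P₁` by `√2/2`.
-/

theorem Real.cos_sq_pi_div_eight : cos (π / 8) ^ 2 = 1 / 2 + √2 / 4 := by
  rw [cos_sq, show 2 * (π / 8) = π / 4 by ring, cos_pi_div_four]
  ring

theorem Real.sin_sq_pi_div_eight : sin (π / 8) ^ 2 = 1 / 2 - √2 / 4 := by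
  linarith [sin_sq_add_cos_sq (π / 8), cos_sq_pi_div_eight]

theorem Real.cos_mul_sin_pi_div_eight : cos (π / 8) * sin (π / 8) = √2 / 4 := by
  have h := sin_two_mul (π / 8)
  rw [show 2 * (π / 8) = π / 4 by ring, sin_pi_div_four] at h
  linarith

theorem Real.tan_pi_div_eight : tan (π / 8) = √2 - 1 := by
  have hcos : 0 < cos (π / 8) := cos_pos_of_mem_Ioo ⟨by linarith [pi_pos], by linarith [pi_pos]⟩
  rw [tan_eq_sin_div_cos, div_eq_iff hcos.ne', ← mul_left_inj' hcos.ne']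
  linear_combination cos_mul_sin_pi_div_eight + (1 - √2) * cos_sq_pi_div_eight
    - sq_sqrt (zero_le_two : (0 : ℝ) ≤ 2) / 4

theorem symm_eq_smul_P0_add_smul_P1_add_smul_Pplus (a b c : ℝ) :
    !![a, c; c, b] = (a - c) • P0 + (b - c) • P1 + (2 * c) • Pplus := by
  simp only [P0, P1, Pplus, Matrix.smul_of, Matrix.smul_cons, Matrix.smul_empty, Matrix.of_add_of,
    Matrix.add_cons, Matrix.head_cons, Matrix.tail_cons, Matrix.empty_add_empty, smul_eq_mul]
  ring_nf

theorem ρdeph_eq_smul_P0_add_smul_P1_add_smul_Pplus (p : ℝ) :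
    ρdeph p = (1/2 + p / √2) • P0 + ((1 - √2) / 2 + p / √2) • P1
      + (1 / √2 - √2 * p) • Pplus := by
  have h2 : √2 ^ 2 = 2 := sq_sqrt zero_le_two
  rw [ρdeph, mul_assoc, cos_mul_sin_pi_div_eight, cos_sq_pi_div_eight, sin_sq_pi_div_eight,
    symm_eq_smul_P0_add_smul_P1_add_smul_Pplus]
  congr 3 <;> field_simp
  · linear_combination 4 * p * h2
  · linear_combination 4 * p * h2
  · linear_combination 2 * h2

theorem stabilizer_coeffs_nonneg_iff (p : ℝ) :
    (0 ≤ 1/2 + p / √2 ∧ 0 ≤ (1 - √2) / 2 + p / √2 ∧ 0 ≤ 1 / √2 - √2 * p)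
      ↔ (1 - √2 / 2 ≤ p ∧ p ≤ 1/2) := by
  have hs : 0 < √2 := by positivity
  have h2 : √2 ^ 2 = 2 := sq_sqrt zero_le_two
  have hP1 : 0 ≤ (1 - √2) / 2 + p / √2 ↔ 1 - √2 / 2 ≤ p := by
    rw [show (1 - √2) / 2 + p / √2 = (p - (1 - √2 / 2)) / √2 by
      field_simp; linear_combination -h2, le_div_iff₀ hs, zero_mul, sub_nonneg]
  have hPplus : 0 ≤ 1 / √2 - √2 * p ↔ p ≤ 1/2 := by
    rw [show 1 / √2 - √2 * p = √2 * (1/2 - p) by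
      field_simp; linear_combination -h2, mul_nonneg_iff_of_pos_left hs, sub_nonneg]
  have hP0 : (1 - √2) / 2 + p / √2 ≤ 1/2 + p / √2 := by linarith
  rw [← hP1, ← hPplus]
  exact ⟨fun h => h.2, fun h => ⟨h.1.trans hP0, h⟩⟩

theorem stmt_9 (p : ℝ) :
    ρdeph p = (1/2 + p / Real.sqrt 2) • P0 + ((1 - Real.sqrt 2) / 2 + p / Real.sqrt 2) • P1
        + (1 / Real.sqrt 2 - Real.sqrt 2 * p) • Pplus
    ∧ ((0 ≤ 1/2 + p / Real.sqrt 2 ∧ 0 ≤ (1 - Real.sqrt 2) / 2 + p / Real.sqrt 2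
          ∧ 0 ≤ 1 / Real.sqrt 2 - Real.sqrt 2 * p)
        ↔ ((1 - tan (π/8)) / 2 ≤ p ∧ p ≤ 1/2)) := by
  refine ⟨ρdeph_eq_smul_P0_add_smul_P1_add_smul_Pplus p, ?_⟩
  rw [tan_pi_div_eight, show (1 - (√2 - 1)) / 2 = 1 - √2 / 2 by ring]
  exact stabilizer_coeffs_nonneg_iff p
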